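/- arXiv:2308.05887 — 5 statements merged into one kernel-verified Lean document; each statement's English description precedes it below -/
import Mathlib

section
/- Let $F : \HH \to \HH$ be a continuously differentiable monotone operator, $C \subseteq \HH$ closed convex, $\lambda > 0$, $\hat\sigma \in [0, 1/2)$, $x_{-}, y_{-}, y \in \HH$, $\nu_{-} \in N_C(y_{-})$, $\nu \in N_C(y)$. If $\|\lambda(F(y_{-}) + F'(y_{-})(y - y_{-}) + \nu) + y - x_{-}\| \le \hat\sigma \|y - y_{-}\|$, then $\|y - y_{-}\| \le \frac{1}{1 - \hat\sigma}\|\lambda(F(y_{-}) + \nu_{-}) + y_{-} - x_{-}\|$. -/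
open scoped RealInnerProductSpace

open Filter Topology

lemma fderiv_inner_nonneg_of_mono {H : Type*} [NormedAddCommGroup H] [InnerProductSpace ℝ H]
    (F : H → H) (hF : Differentiable ℝ F)
    (hmono : ∀ x y : H, ⟪F x - F y, x - y⟫ ≥ 0) (x h : H) :
    0 ≤ ⟪fderiv ℝ F x h, h⟫ := by
  set φ : ℝ → ℝ := fun t => ⟪F (x + t • h) - F x, h⟫ with hφ
  have hpath : HasDerivAt (fun t : ℝ => x + t • h) h 0 := by
    simpa using ((hasDerivAt_id (0:ℝ)).smul_const h).const_add x
  have hfd : HasDerivAt (fun t : ℝ => F (x + t • h)) (fderiv ℝ F x h) 0 := by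
    have hx : HasFDerivAt F (fderiv ℝ F x) (x + (0:ℝ) • h) := by
      simpa using (hF x).hasFDerivAt
    exact hx.comp_hasDerivAt 0 hpath
  have hder : HasDerivAt φ ⟪fderiv ℝ F x h, h⟫ 0 := by
    have := (hfd.sub_const (F x)).inner ℝ (hasDerivAt_const (0:ℝ) h)
    simpa using this
  have hslope : Tendsto (slope φ 0) (𝓝[≠] (0:ℝ)) (𝓝 ⟪fderiv ℝ F x h, h⟫) :=
    hasDerivAt_iff_tendsto_slope.mp hder
  have hslope' : Tendsto (slope φ 0) (𝓝[>] (0:ℝ)) (𝓝 ⟪fderiv ℝ F x h, h⟫) :=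
    hslope.mono_left (nhdsWithin_mono _ fun t ht => ne_of_gt ht)
  refine ge_of_tendsto hslope' ?_
  filter_upwards [self_mem_nhdsWithin] with t ht
  have ht' : (0:ℝ) < t := ht
  have hnn : 0 ≤ φ t := by
    have := hmono (x + t • h) x
    have h2 : ⟪F (x + t • h) - F x, t • h⟫ ≥ 0 := by simpa using this
    rw [real_inner_smul_right] at h2
    have := nonneg_of_mul_nonneg_right h2 ht'
    · simpa [hφ] using (nonneg_of_mul_nonneg_right h2 ht')
  have hφ0 : φ 0 = 0 := by simp [hφ]
  rw [slope_def_field]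
  simp only [hφ0, sub_zero]
  positivity

theorem stmt_4 {H : Type*} [NormedAddCommGroup H] [InnerProductSpace ℝ H]
    (C : Set H) (hC : IsClosed C) (hconv : Convex ℝ C)
    (F : H → H) (hF : Differentiable ℝ F)
    (hmono : ∀ x y : H, ⟪F x - F y, x - y⟫ ≥ 0)
    (lam σh : ℝ) (hlam : 0 < lam) (hσ0 : 0 ≤ σh) (hσ1 : σh < 1/2)
    (xm ym y νm ν : H) (hym : ym ∈ C) (hy : y ∈ C)
    (hνm : ∀ z ∈ C, ⟪νm, z - ym⟫ ≤ 0) (hν : ∀ z ∈ C, ⟪ν, z - y⟫ ≤ 0)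
    (herr : ‖lam • (F ym + fderiv ℝ F ym (y - ym) + ν) + y - xm‖ ≤ σh * ‖y - ym‖) :
    ‖y - ym‖ ≤ (1 / (1 - σh)) * ‖lam • (F ym + νm) + ym - xm‖ := by
  set d := y - ym with hd
  set r := lam • (F ym + fderiv ℝ F ym (y - ym) + ν) + y - xm with hr
  set s := lam • (F ym + νm) + ym - xm with hs
  have hσ1' : (0:ℝ) < 1 - σh := by linarith
  have hcone : 0 ≤ ⟪ν - νm, d⟫ := by
    have h1 := hν ym hym
    have h2 := hνm y hy
    have : ⟪ν, ym - y⟫ + ⟪νm, y - ym⟫ ≤ 0 := by linarith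
    have e : ⟪ν - νm, d⟫ = -(⟪ν, ym - y⟫ + ⟪νm, y - ym⟫) := by
      simp [hd, inner_sub_left, inner_sub_right]; ring
    linarith [e ▸ neg_nonneg.mpr this]
  have hderiv : 0 ≤ ⟪fderiv ℝ F ym d, d⟫ :=
    fderiv_inner_nonneg_of_mono F hF hmono ym d
  have hkey : ‖d‖ ^ 2 ≤ ⟪r - s, d⟫ := by
    have e : r - s = lam • (fderiv ℝ F ym d) + lam • (ν - νm) + d := by
      simp only [hr, hs, hd]
      module
    rw [e]
    simp only [inner_add_left, real_inner_smul_left, real_inner_self_eq_norm_sq]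
    nlinarith
  have hcs : ⟪r - s, d⟫ ≤ (‖r‖ + ‖s‖) * ‖d‖ := by
    calc ⟪r - s, d⟫ ≤ ‖r - s‖ * ‖d‖ := real_inner_le_norm _ _
      _ ≤ (‖r‖ + ‖s‖) * ‖d‖ := by
          gcongr
          exact norm_sub_le _ _
  have hbound : ‖d‖ ^ 2 ≤ (σh * ‖d‖ + ‖s‖) * ‖d‖ := by
    calc ‖d‖ ^ 2 ≤ (‖r‖ + ‖s‖) * ‖d‖ := hkey.trans hcs
      _ ≤ (σh * ‖d‖ + ‖s‖) * ‖d‖ := by gcongr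
  rcases eq_or_lt_of_le (norm_nonneg d) with h0 | h0
  · rw [← h0]; positivity
  · rw [div_mul_eq_mul_div, le_div_iff₀ hσ1']
    nlinarith
end

section
/- Let $T : \HH \rightrightarrows \HH$ be monotone, let $\lambda_1, \dots, \lambda_k > 0$, $y_1, \dots, y_k \in \HH$ and $v_i \in T(y_i)$ for each $i$. Define $\Lambda = \sum_i \lambda_i$, $y^a = \Lambda^{-1}\sum_i \lambda_i y_i$, $v^a = \Lambda^{-1}\sum_i \lambda_i v_i$, and $\varepsilon^a = \Lambda^{-1}\sum_i \lambda_i \langle y_i - y^a, v_i - v^a \rangle$. Then $\varepsilon^a \ge 0$ and $v^a \in T^{\varepsilon^a}(y^a)$. -/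
open scoped RealInnerProductSpace

set_option maxHeartbeats 800000

theorem stmt_6 {H : Type*} [NormedAddCommGroup H] [InnerProductSpace ℝ H]
    (T : H → Set H)
    (hmono : ∀ z z' u u', u ∈ T z → u' ∈ T z' → ⟪u - u', z - z'⟫ ≥ 0)
    (k : ℕ) (hk : 0 < k)
    (lam : Fin k → ℝ) (hlam : ∀ i, 0 < lam i)
    (y v : Fin k → H) (hv : ∀ i, v i ∈ T (y i))
    (Λ : ℝ) (hΛ : Λ = ∑ i, lam i)
    (ya va : H) (hya : ya = Λ⁻¹ • ∑ i, lam i • y i)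
    (hva : va = Λ⁻¹ • ∑ i, lam i • v i)
    (εa : ℝ) (hεa : εa = Λ⁻¹ * ∑ i, lam i * ⟪y i - ya, v i - va⟫) :
    0 ≤ εa ∧ ∀ z u, u ∈ T z → ⟪va - u, ya - z⟫ ≥ -εa := by
  haveI : Nonempty (Fin k) := Fin.pos_iff_nonempty.mp hk
  have hΛpos : 0 < Λ := by
    rw [hΛ]; exact Finset.sum_pos (fun i _ => hlam i) Finset.univ_nonempty
  have hΛne : Λ ≠ 0 := hΛpos.ne'
  set a : Fin k → H := fun i => y i - ya with ha_def
  set b : Fin k → H := fun i => v i - va with hb_def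
  have hY : ∑ i, lam i • y i = Λ • ya := by
    rw [hya, smul_smul, mul_inv_cancel₀ hΛne, one_smul]
  have hV : ∑ i, lam i • v i = Λ • va := by
    rw [hva, smul_smul, mul_inv_cancel₀ hΛne, one_smul]
  have hsa : ∑ i, lam i • a i = 0 := by
    have : ∑ i, lam i • a i = (∑ i, lam i • y i) - (∑ i, lam i) • ya := by
      rw [Finset.sum_smul, ← Finset.sum_sub_distrib]
      exact Finset.sum_congr rfl (fun i _ => by simp [ha_def, smul_sub])
    rw [this, hY, ← hΛ, sub_self]
  have hsb : ∑ i, lam i • b i = 0 := by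
    have : ∑ i, lam i • b i = (∑ i, lam i • v i) - (∑ i, lam i) • va := by
      rw [Finset.sum_smul, ← Finset.sum_sub_distrib]
      exact Finset.sum_congr rfl (fun i _ => by simp [hb_def, smul_sub])
    rw [this, hV, ← hΛ, sub_self]
  have hε' : Λ * εa = ∑ i, lam i * ⟪a i, b i⟫ := by
    rw [hεa, ← mul_assoc, mul_inv_cancel₀ hΛne, one_mul]
  have hεnn : 0 ≤ εa := by
    have expand : ∀ i j, lam i * lam j * ⟪y i - y j, v i - v j⟫ =
        lam j * (lam i * ⟪a i, b i⟫) + lam i * (lam j * ⟪a j, b j⟫)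
          - (⟪lam i • a i, lam j • b j⟫ + ⟪lam j • a j, lam i • b i⟫) := by
      intro i j
      have hy : y i - y j = a i - a j := (sub_sub_sub_cancel_right _ _ _).symm
      have hvv : v i - v j = b i - b j := (sub_sub_sub_cancel_right _ _ _).symm
      rw [hy, hvv]
      simp only [inner_sub_left, inner_sub_right, real_inner_smul_left,
        real_inner_smul_right]
      ring
    have hdouble : ∑ i, ∑ j, lam i * lam j * ⟪y i - y j, v i - v j⟫ =
        2 * (Λ * (Λ * εa)) := by
      have e1 : ∑ i, ∑ j, ⟪lam i • a i, lam j • b j⟫ = (0:ℝ) := by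
        have : ∀ i, ∑ j, ⟪lam i • a i, lam j • b j⟫ = ⟪lam i • a i, ∑ j, lam j • b j⟫ := by
          intro i; rw [inner_sum]
        simp [this, hsb]
      have e2 : ∑ i, ∑ j, ⟪lam j • a j, lam i • b i⟫ = (0:ℝ) := by
        have : ∀ i, ∑ j, ⟪lam j • a j, lam i • b i⟫ = ⟪∑ j, lam j • a j, lam i • b i⟫ := by
          intro i; rw [sum_inner]
        simp [this, hsa]
      calc ∑ i, ∑ j, lam i * lam j * ⟪y i - y j, v i - v j⟫
          = ∑ i, ∑ j, (lam j * (lam i * ⟪a i, b i⟫) + lam i * (lam j * ⟪a j, b j⟫)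
              - (⟪lam i • a i, lam j • b j⟫ + ⟪lam j • a j, lam i • b i⟫)) := by
            exact Finset.sum_congr rfl fun i _ => Finset.sum_congr rfl fun j _ => expand i j
        _ = (∑ i, ∑ j, lam j * (lam i * ⟪a i, b i⟫))
            + (∑ i, ∑ j, lam i * (lam j * ⟪a j, b j⟫))
            - ((∑ i, ∑ j, ⟪lam i • a i, lam j • b j⟫)
              + (∑ i, ∑ j, ⟪lam j • a j, lam i • b i⟫)) := by
            simp only [Finset.sum_sub_distrib, Finset.sum_add_distrib]
        _ = 2 * (Λ * (Λ * εa)) := by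
            rw [e1, e2, hε']
            have f1 : ∑ i, ∑ j, lam j * (lam i * ⟪a i, b i⟫)
                = Λ * ∑ i, lam i * ⟪a i, b i⟫ := by
              rw [Finset.sum_comm, hΛ, Finset.sum_mul]
              exact Finset.sum_congr rfl fun j _ => by rw [← Finset.mul_sum]
            have f2 : ∑ i, ∑ j, lam i * (lam j * ⟪a j, b j⟫)
                = Λ * ∑ j, lam j * ⟪a j, b j⟫ := by
              rw [hΛ, Finset.sum_mul]
              exact Finset.sum_congr rfl fun i _ => by rw [← Finset.mul_sum]
            rw [f1, f2]; ring
    have hnn : 0 ≤ ∑ i, ∑ j, lam i * lam j * ⟪y i - y j, v i - v j⟫ := by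
      refine Finset.sum_nonneg fun i _ => Finset.sum_nonneg fun j _ => ?_
      have := hmono (y i) (y j) (v i) (v j) (hv i) (hv j)
      rw [real_inner_comm] at this
      exact mul_nonneg (mul_nonneg (hlam i).le (hlam j).le) this
    have h2 : 0 ≤ 2 * (Λ * (Λ * εa)) := hdouble ▸ hnn
    nlinarith [mul_pos hΛpos hΛpos]
  refine ⟨hεnn, fun z u hu => ?_⟩
  have key : ∑ i, lam i * ⟪v i - u, y i - z⟫ = Λ * εa + Λ * ⟪va - u, ya - z⟫ := by
    have expand : ∀ i, lam i * ⟪v i - u, y i - z⟫ =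
        lam i * ⟪a i, b i⟫ + ⟪lam i • b i, ya - z⟫ + ⟪va - u, lam i • a i⟫
          + lam i * ⟪va - u, ya - z⟫ := by
      intro i
      have h1 : v i - u = b i + (va - u) := by simp [hb_def]
      have h2 : y i - z = a i + (ya - z) := by simp [ha_def]
      rw [h1, h2]
      simp only [inner_add_left, inner_add_right, real_inner_smul_left,
        real_inner_smul_right]
      rw [real_inner_comm (b i) (a i)]
      ring
    calc ∑ i, lam i * ⟪v i - u, y i - z⟫
        = (∑ i, lam i * ⟪a i, b i⟫) + ⟪∑ i, lam i • b i, ya - z⟫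
          + ⟪va - u, ∑ i, lam i • a i⟫ + (∑ i, lam i) * ⟪va - u, ya - z⟫ := by
          rw [sum_inner, inner_sum, Finset.sum_mul]
          simp only [← Finset.sum_add_distrib]
          exact Finset.sum_congr rfl fun i _ => expand i
      _ = Λ * εa + Λ * ⟪va - u, ya - z⟫ := by
          rw [hsa, hsb, hε', ← hΛ]
          simp only [inner_zero_left, inner_zero_right, add_zero]
  have hnn : 0 ≤ ∑ i, lam i * ⟪v i - u, y i - z⟫ :=
    Finset.sum_nonneg fun i _ =>
      mul_nonneg (hlam i).le (hmono (y i) z (v i) u (hv i) hu)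
  nlinarith [hnn, key, hΛpos]
end

section
/- Suppose at iteration $k$ of Algorithm 2 the pair $(y_k, \nu_k)$ with $\nu_k \in N_C(y_k)$ satisfies $\|\lambda_k(F_{y_{k-1}}(y_k) + \nu_k) + y_k - x_{k-1}\| \le \hat\sigma \|y_k - y_{k-1}\|$, where $\nu_{k-1} \in N_C(y_{k-1})$. If $\frac{\lambda_k L}{2}\|\lambda_k(F(y_{k-1}) + \nu_{k-1}) + y_{k-1} - x_{k-1}\| \le \theta$, then $\frac{\lambda_k L}{2}\|\lambda_k(F(y_k) + \nu_k) + y_k - x_{k-1}\| \le \hat\theta$, where $\hat\theta = \theta(\frac{\hat\sigma}{1-\hat\sigma} + \frac{\theta}{(1-\hat\sigma)^2})$. -/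
/-!
Testing the residual of the linearized step against `d = y_k - y_{k-1}`, monotonicity of `F`
(which makes `F'(y_{k-1})` positive semidefinite) and of the normal cone give `‖d‖² ≤ ⟪e - w, d⟫`,
where `e` is the inexact residual and `w` the previous one; hence `(1 - σ̂) ‖d‖ ≤ ‖w‖`.
Replacing the linearization by `F` costs at most `λ L/2 ‖d‖²`, so with `u = λ L/2 ‖d‖`, which is
at most `θ / (1 - σ̂)`, the scaled new residual is at most `σ̂ u + u² ≤ θ̂`.
-/

open scoped RealInnerProductSpace

section InnerProductSpace

variable {H : Type*} [NormedAddCommGroup H] [InnerProductSpace ℝ H]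

theorem inner_fderiv_apply_self_nonneg {F : H → H} (hmono : ∀ x y : H, ⟪F x - F y, x - y⟫ ≥ 0)
    {x : H} (hF : DifferentiableAt ℝ F x) (v : H) : 0 ≤ ⟪fderiv ℝ F x v, v⟫ := by
  have hline : HasDerivAt (fun t : ℝ => x + t • v) v 0 := by
    simpa using ((hasDerivAt_id (0 : ℝ)).smul_const v).const_add x
  have hderiv : HasDerivAt (fun t : ℝ => ⟪F (x + t • v), v⟫) ⟪fderiv ℝ F x v, v⟫ 0 :=
    (hF.hasFDerivAt.comp_hasDerivAt_of_eq 0 hline (by simp)).inner ℝ (hasDerivAt_const 0 v)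
      |>.congr_deriv (by simp)
  refine hderiv.nonneg_of_monotone fun s t hst => ?_
  have h := hmono (x + t • v) (x + s • v)
  rw [show x + t • v - (x + s • v) = (t - s) • v by module, real_inner_smul_right,
    inner_sub_left] at h
  rcases hst.eq_or_lt with rfl | hlt
  · rfl
  · simpa using nonneg_of_mul_nonneg_right h (sub_pos.2 hlt)

theorem inner_sub_nonneg_of_mem_normalCone {C : Set H} {x y u v : H} (hx : x ∈ C) (hy : y ∈ C)
    (hu : ∀ z ∈ C, ⟪u, z - x⟫ ≤ 0) (hv : ∀ z ∈ C, ⟪v, z - y⟫ ≤ 0) : 0 ≤ ⟪u - v, x - y⟫ := by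
  have h₁ := hu y hy
  have h₂ := hv x hx
  rw [inner_sub_left]
  rw [← neg_sub x y, inner_neg_right] at h₁
  linarith

theorem norm_le_of_sq_norm_le_inner {d u : H} (h : ‖d‖ ^ 2 ≤ ⟪u, d⟫) : ‖d‖ ≤ ‖u‖ := by
  by_contra! hlt
  nlinarith [real_inner_le_norm u d, norm_nonneg u]

theorem one_sub_mul_norm_sub_le {σ lam : ℝ} (hlam : 0 ≤ lam) {f a x y₀ y ν₀ ν : H}
    (ha : 0 ≤ ⟪a, y - y₀⟫) (hν : 0 ≤ ⟪ν - ν₀, y - y₀⟫)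
    (herr : ‖lam • (f + a + ν) + y - x‖ ≤ σ * ‖y - y₀‖) :
    (1 - σ) * ‖y - y₀‖ ≤ ‖lam • (f + ν₀) + y₀ - x‖ := by
  set e := lam • (f + a + ν) + y - x
  set w := lam • (f + ν₀) + y₀ - x
  have hsq : ‖y - y₀‖ ^ 2 ≤ ⟪e - w, y - y₀⟫ := by
    have hew : e - w = lam • (a + (ν - ν₀)) + (y - y₀) := by simp only [e, w]; module
    rw [hew, inner_add_left, real_inner_smul_left, inner_add_left, real_inner_self_eq_norm_sq]
    nlinarith [mul_nonneg hlam (add_nonneg ha hν)]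
  linarith [norm_le_of_sq_norm_le_inner hsq, norm_sub_le e w]

end InnerProductSpace

theorem norm_sub_sub_fderiv_apply_le {E G : Type*} [NormedAddCommGroup E] [NormedSpace ℝ E]
    [NormedAddCommGroup G] [NormedSpace ℝ G] {f : E → G} (hf : Differentiable ℝ f) {L : ℝ}
    (hLip : ∀ x y : E, ‖fderiv ℝ f x - fderiv ℝ f y‖ ≤ L * ‖x - y‖) (x y : E) :
    ‖f y - f x - fderiv ℝ f x (y - x)‖ ≤ L / 2 * ‖y - x‖ ^ 2 := by
  set d := y - x
  set g : ℝ → G := fun t => f (x + t • d) - f x - t • fderiv ℝ f x d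
  have hg : ∀ t, HasDerivAt g (fderiv ℝ f (x + t • d) d - fderiv ℝ f x d) t := by
    intro t
    have hline : HasDerivAt (fun t : ℝ => x + t • d) d t := by
      simpa using ((hasDerivAt_id t).smul_const d).const_add x
    exact (((hf _).hasFDerivAt.comp_hasDerivAt t hline).sub_const (f x)).sub
      (by simpa using (hasDerivAt_id t).smul_const (fderiv ℝ f x d))
  have hB : ∀ t, HasDerivAt (fun t : ℝ => L / 2 * ‖d‖ ^ 2 * t ^ 2) (L * ‖d‖ ^ 2 * t) t := fun t =>
    ((hasDerivAt_pow 2 t).const_mul (L / 2 * ‖d‖ ^ 2)).congr_deriv (by push_cast; ring)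
  have bound : ∀ t ∈ Set.Ico (0 : ℝ) 1,
      ‖fderiv ℝ f (x + t • d) d - fderiv ℝ f x d‖ ≤ L * ‖d‖ ^ 2 * t := fun t ht =>
    calc ‖fderiv ℝ f (x + t • d) d - fderiv ℝ f x d‖
        ≤ ‖fderiv ℝ f (x + t • d) - fderiv ℝ f x‖ * ‖d‖ :=
          (fderiv ℝ f (x + t • d) - fderiv ℝ f x).le_opNorm d
      _ ≤ L * ‖t • d‖ * ‖d‖ := by
          gcongr
          simpa using hLip (x + t • d) x
      _ = L * ‖d‖ ^ 2 * t := by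
          rw [norm_smul, Real.norm_of_nonneg ht.1]
          ring
  have := image_norm_le_of_norm_deriv_right_le_deriv_boundary
    (fun t _ => (hg t).continuousAt.continuousWithinAt) (fun t _ => (hg t).hasDerivWithinAt)
    (by simp [g]) hB bound (Set.right_mem_Icc.2 zero_le_one)
  simpa [g, d] using this

theorem mul_add_sq_le_of_one_sub_mul_le {σ θ u : ℝ} (hσ0 : 0 ≤ σ) (hσ1 : σ < 1) (hu : 0 ≤ u)
    (h : (1 - σ) * u ≤ θ) : σ * u + u ^ 2 ≤ θ * (σ / (1 - σ) + θ / (1 - σ) ^ 2) := by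
  have hu' : u ≤ θ / (1 - σ) := (le_div_iff₀ (by linarith)).2 (by linarith)
  calc σ * u + u ^ 2 ≤ σ * (θ / (1 - σ)) + (θ / (1 - σ)) ^ 2 := by gcongr
    _ = θ * (σ / (1 - σ) + θ / (1 - σ) ^ 2) := by rw [div_pow]; ring

theorem stmt_7_general {H : Type*} [NormedAddCommGroup H] [InnerProductSpace ℝ H]
    (C : Set H)
    (F : H → H) (hF : ContDiff ℝ 1 F)
    (hmono : ∀ x y : H, ⟪F x - F y, x - y⟫ ≥ 0)
    (L : ℝ) (hL : 0 < L)
    (hLip : ∀ x y : H, ‖fderiv ℝ F x - fderiv ℝ F y‖ ≤ L * ‖x - y‖)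
    (σh θ θh : ℝ) (hσ0 : 0 ≤ σh) (hσ1 : σh < 1/2)
    (hθh : θh = θ * (σh / (1 - σh) + θ / (1 - σh)^2))
    (lam : ℝ) (hlam : 0 < lam)
    (xm ym yk νm νk : H) (hym : ym ∈ C) (hyk : yk ∈ C)
    (hνm : ∀ z ∈ C, ⟪νm, z - ym⟫ ≤ 0) (hνk : ∀ z ∈ C, ⟪νk, z - yk⟫ ≤ 0)
    (herr : ‖lam • (F ym + fderiv ℝ F ym (yk - ym) + νk) + yk - xm‖ ≤
      σh * ‖yk - ym‖)
    (hprem : lam * L / 2 * ‖lam • (F ym + νm) + ym - xm‖ ≤ θ) :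
    lam * L / 2 * ‖lam • (F yk + νk) + yk - xm‖ ≤ θh := by
  have hdiff : Differentiable ℝ F := hF.differentiable one_ne_zero
  have hstep : (1 - σh) * ‖yk - ym‖ ≤ ‖lam • (F ym + νm) + ym - xm‖ :=
    one_sub_mul_norm_sub_le hlam.le (inner_fderiv_apply_self_nonneg hmono (hdiff ym) _)
      (inner_sub_nonneg_of_mem_normalCone hyk hym hνk hνm) herr
  have hres : ‖lam • (F yk + νk) + yk - xm‖ ≤ σh * ‖yk - ym‖ + lam * (L / 2 * ‖yk - ym‖ ^ 2) :=
    calc ‖lam • (F yk + νk) + yk - xm‖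
        = ‖(lam • (F ym + fderiv ℝ F ym (yk - ym) + νk) + yk - xm) +
            lam • (F yk - F ym - fderiv ℝ F ym (yk - ym))‖ := by congr 1; module
      _ ≤ σh * ‖yk - ym‖ + lam * (L / 2 * ‖yk - ym‖ ^ 2) := by
          grw [norm_add_le, norm_smul, Real.norm_of_nonneg hlam.le, herr,
            norm_sub_sub_fderiv_apply_le hdiff hLip]
  have hscale : 0 ≤ lam * L / 2 := by positivity
  calc lam * L / 2 * ‖lam • (F yk + νk) + yk - xm‖
      ≤ lam * L / 2 * (σh * ‖yk - ym‖ + lam * (L / 2 * ‖yk - ym‖ ^ 2)) := by gcongr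
    _ = σh * (lam * L / 2 * ‖yk - ym‖) + (lam * L / 2 * ‖yk - ym‖) ^ 2 := by ring
    _ ≤ θh := by
        rw [hθh]
        refine mul_add_sq_le_of_one_sub_mul_le hσ0 (by linarith) (by positivity) ?_
        calc (1 - σh) * (lam * L / 2 * ‖yk - ym‖)
            = lam * L / 2 * ((1 - σh) * ‖yk - ym‖) := by ring
          _ ≤ θ := by grw [hstep]; exact hprem

theorem stmt_7 {H : Type*} [NormedAddCommGroup H] [InnerProductSpace ℝ H]
    [CompleteSpace H]
    (C : Set H) (hC : IsClosed C) (hconv : Convex ℝ C)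
    (F : H → H) (hF : ContDiff ℝ 1 F)
    (hmono : ∀ x y : H, ⟪F x - F y, x - y⟫ ≥ 0)
    (L : ℝ) (hL : 0 < L)
    (hLip : ∀ x y : H, ‖fderiv ℝ F x - fderiv ℝ F y‖ ≤ L * ‖x - y‖)
    (σh θ θh : ℝ) (hσ0 : 0 ≤ σh) (hσ1 : σh < 1/2)
    (hθ0 : 0 < θ) (hθub : θ < (1 - σh) * (1 - 2*σh))
    (hθh : θh = θ * (σh / (1 - σh) + θ / (1 - σh)^2))
    (lam : ℝ) (hlam : 0 < lam)
    (xm ym yk νm νk : H) (hym : ym ∈ C) (hyk : yk ∈ C)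
    (hνm : ∀ z ∈ C, ⟪νm, z - ym⟫ ≤ 0) (hνk : ∀ z ∈ C, ⟪νk, z - yk⟫ ≤ 0)
    (herr : ‖lam • (F ym + fderiv ℝ F ym (yk - ym) + νk) + yk - xm‖ ≤
      σh * ‖yk - ym‖)
    (hprem : lam * L / 2 * ‖lam • (F ym + νm) + ym - xm‖ ≤ θ) :
    lam * L / 2 * ‖lam • (F yk + νk) + yk - xm‖ ≤ θh :=
  stmt_7_general C F hF hmono L hL hLip σh θ θh hσ0 hσ1 hθh lam hlam xm ym yk νm νk hym hyk hνm hνk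
    herr hprem
end

section
/- Let $\lambda > 0$, $L > 0$, $\hat\theta, \theta > 0$ with $\hat\theta < \theta$, $\eta > 0$, $\tau \in (0,1)$ satisfying $\theta \tau^2 - (2\theta + \frac{\eta L}{2})\tau + \theta - \hat\theta = 0$. Let $x, y \in \HH$, $w \in \HH$ with $\frac{\lambda L}{2}\|\lambda w + y - x\| \le \hat\theta$ and $\lambda \|y - x\| < \eta$. Set $\lambda' = \lambda/(1-\tau)$. Then $\frac{\lambda' L}{2}\|\lambda' w + y - x\| \le \theta$. -/
/-! Writing `v = y - x`, the step `λ ↦ λ / (1 - τ)` gives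
`(λ / (1 - τ)) • w + v = (1 - τ)⁻¹ • ((λ • w + v) - τ • v)`, so the new residual is controlled by
the old one and by `τ ‖v‖ < τ η / λ`. Both pieces carry a factor `(1 - τ)⁻²`, and `τ` is chosen
as the root of the quadratic that makes `(θ̂ + τ η L / 2) / (1 - τ)² = θ`. -/

theorem norm_div_one_sub_smul_add_le {E : Type*} [SeminormedAddCommGroup E] [NormedSpace ℝ E]
    {τ : ℝ} (hτ0 : 0 ≤ τ) (hτ1 : τ < 1) (lam : ℝ) (w v : E) :
    ‖(lam / (1 - τ)) • w + v‖ ≤ (‖lam • w + v‖ + τ * ‖v‖) / (1 - τ) := by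
  have hτ : 0 < 1 - τ := sub_pos.mpr hτ1
  have hsplit : (lam / (1 - τ)) • w + v = (1 - τ)⁻¹ • ((lam • w + v) - τ • v) := by
    match_scalars <;> field_simp
  rw [hsplit, norm_smul, Real.norm_of_nonneg (inv_nonneg.mpr hτ.le), inv_mul_eq_div]
  gcongr
  calc ‖lam • w + v - τ • v‖ ≤ ‖lam • w + v‖ + ‖τ • v‖ := norm_sub_le _ _
    _ = ‖lam • w + v‖ + τ * ‖v‖ := by rw [norm_smul, Real.norm_of_nonneg hτ0]

theorem stmt_9_general {H : Type*} [NormedAddCommGroup H] [InnerProductSpace ℝ H]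
    (lam L θh θ η τ : ℝ) (hlam : 0 < lam) (hL : 0 < L)
    (hτ0 : 0 < τ) (hτ1 : τ < 1)
    (hroot : θ * τ^2 - (2*θ + η*L/2) * τ + (θ - θh) = 0)
    (x y w : H) (h : lam * L / 2 * ‖lam • w + y - x‖ ≤ θh)
    (hsmall : lam * ‖y - x‖ < η)
    (lam' : ℝ) (hlam' : lam' = lam / (1 - τ)) :
    lam' * L / 2 * ‖lam' • w + y - x‖ ≤ θ := by
  have hτ : 0 < 1 - τ := sub_pos.mpr hτ1
  have hstep := norm_div_one_sub_smul_add_le hτ0.le hτ1 lam w (y - x)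
  simp only [add_sub_assoc] at h ⊢
  subst hlam'
  calc lam / (1 - τ) * L / 2 * ‖(lam / (1 - τ)) • w + (y - x)‖
      ≤ lam / (1 - τ) * L / 2 * ((‖lam • w + (y - x)‖ + τ * ‖y - x‖) / (1 - τ)) := by
        gcongr
    _ = (lam * L / 2 * ‖lam • w + (y - x)‖ + τ * (L / 2) * (lam * ‖y - x‖)) / (1 - τ) ^ 2 := by
        field_simp
    _ ≤ (θh + τ * (L / 2) * η) / (1 - τ) ^ 2 := by gcongr
    _ = θ := by
        rw [div_eq_iff (by positivity)]
        linear_combination -hroot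

theorem stmt_9 {H : Type*} [NormedAddCommGroup H] [InnerProductSpace ℝ H]
    (lam L θh θ η τ : ℝ) (hlam : 0 < lam) (hL : 0 < L)
    (hθh : 0 < θh) (hθ : θh < θ) (hη : 0 < η)
    (hτ0 : 0 < τ) (hτ1 : τ < 1)
    (hroot : θ * τ^2 - (2*θ + η*L/2) * τ + (θ - θh) = 0)
    (x y w : H) (h : lam * L / 2 * ‖lam • w + y - x‖ ≤ θh)
    (hsmall : lam * ‖y - x‖ < η)
    (lam' : ℝ) (hlam' : lam' = lam / (1 - τ)) :
    lam' * L / 2 * ‖lam' • w + y - x‖ ≤ θ :=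
  stmt_9_general lam L θh θ η τ hlam hL hτ0 hτ1 hroot x y w h hsmall lam' hlam'
end

section
/- Let $\hat\sigma \in [0,1/2)$, $\theta = \frac{(1-\hat\sigma)(1-2\hat\sigma)}{2}$, $\hat\theta = \frac{1-2\hat\sigma}{4}$, $L > 0$, $\eta = \frac{4\theta}{L}$, and let $\tau$ be the smallest root of $\theta t^2 - (2\theta + \frac{\eta L}{2})t + \theta - \hat\theta = 0$. Then $\tau > \frac{1 - 2\hat\sigma}{8(1-\hat\sigma)}$ and $\tau\eta > \frac{(1-2\hat\sigma)^2}{4L}$. -/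
/-! The smallest root `2c / (b + √(b² - 4ac))` of `a t² - b t + c` exceeds `c / b` because the square
root is strictly less than `b`. With `η = 4θ / L` the linear coefficient is `b = 4θ`, and
`c = θ - θ̂ = (1 - 2σ̂)² / 4`, so `c / b = (1 - 2σ̂) / (8 (1 - σ̂))` and `(c / b) η = c / L`. -/

theorem div_lt_two_mul_div_add_sqrt_discrim {a b c : ℝ} (ha : 0 < a) (hb : 0 < b) (hc : 0 < c) :
    c / b < 2 * c / (b + √(b ^ 2 - 4 * a * c)) := by
  have hsqrt : √(b ^ 2 - 4 * a * c) < b :=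
    (Real.sqrt_lt' hb).mpr (by nlinarith [mul_pos ha hc])
  rw [div_lt_div_iff₀ hb (by positivity)]
  nlinarith

theorem stmt_14_general (σh L θ θh η τ : ℝ) (hσ1 : σh < 1/2) (hL : 0 < L)
    (hθ : θ = (1 - σh) * (1 - 2*σh) / 2) (hθh : θh = (1 - 2*σh) / 4)
    (hη : η = 4*θ/L)
    (hτ : τ = 2*(θ - θh) /
      (2*θ + η*L/2 + Real.sqrt ((2*θ + η*L/2)^2 - 4*θ*(θ - θh)))) :
    τ > (1 - 2*σh) / (8*(1 - σh)) ∧ τ * η > (1 - 2*σh)^2 / (4*L) := by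
  have h2σ : 0 < 1 - 2*σh := by linarith
  have hσ : 0 < 1 - σh := by linarith
  have hθ0 : 0 < θ := by rw [hθ]; positivity
  have hc : θ - θh = (1 - 2*σh)^2 / 4 := by rw [hθ, hθh]; ring
  have hb : 2*θ + η*L/2 = 4*θ := by rw [hη]; field_simp; ring
  have hτc : (θ - θh) / (4*θ) < τ :=
    calc (θ - θh) / (4*θ) = (θ - θh) / (2*θ + η*L/2) := by rw [hb]
      _ < τ := hτ ▸ div_lt_two_mul_div_add_sqrt_discrim hθ0 (by rw [hb]; positivity)
          (by rw [hc]; positivity)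
  constructor
  · calc (1 - 2*σh) / (8*(1 - σh)) = (θ - θh) / (4*θ) := by rw [hc, hθ]; field_simp; ring
      _ < τ := hτc
  · calc (1 - 2*σh)^2 / (4*L) = (θ - θh) / (4*θ) * η := by rw [hη, hc]; field_simp
      _ < τ * η := mul_lt_mul_of_pos_right hτc (by rw [hη]; positivity)

theorem stmt_14 (σh L θ θh η τ : ℝ) (hσ0 : 0 ≤ σh) (hσ1 : σh < 1/2) (hL : 0 < L)
    (hθ : θ = (1 - σh) * (1 - 2*σh) / 2) (hθh : θh = (1 - 2*σh) / 4)
    (hη : η = 4*θ/L)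
    (hτ : τ = 2*(θ - θh) /
      (2*θ + η*L/2 + Real.sqrt ((2*θ + η*L/2)^2 - 4*θ*(θ - θh)))) :
    τ > (1 - 2*σh) / (8*(1 - σh)) ∧ τ * η > (1 - 2*σh)^2 / (4*L) :=
  stmt_14_general σh L θ θh η τ hσ1 hL hθ hθh hη hτ
end
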